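/- arXiv:2009.00159 — 2 statements merged into one kernel-verified Lean document; each statement's English description precedes it below -/
import Mathlib

section
/- Let Φ be a quantum channel on Matrix (Fin n) (Fin n) ℂ. Then there exist m ≥ 1, a unitary matrix U ∈ Matrix ((Fin n) × (Fin m)) ((Fin n) × (Fin m)) ℂ, and a density matrix ρ_E ∈ Matrix (Fin m) (Fin m) ℂ such that for every ρ ∈ Matrix (Fin n) (Fin n) ℂ one has Φ(ρ) = tr₂(U * (ρ ⊗ₖ ρ_E) * Uᴴ) (Stinespring dilation). -/
open scoped Kronecker ComplexOrder Matrix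

noncomputable section

/-- The block of `M` at position `(a, b)` when `M` is viewed as a block matrix indexed by
`Fin k × Fin n`. -/
def blockAt {k n : ℕ} (M : Matrix (Fin k × Fin n) (Fin k × Fin n) ℂ) (a b : Fin k) :
    Matrix (Fin n) (Fin n) ℂ :=
  Matrix.of fun i j => M (a, i) (b, j)

/-- The extension `id_k ⊗ Φ` of a linear map `Φ` acting blockwise on block matrices. -/
def matExtend {n : ℕ} (k : ℕ) (Φ : Matrix (Fin n) (Fin n) ℂ →ₗ[ℂ] Matrix (Fin n) (Fin n) ℂ)
    (M : Matrix (Fin k × Fin n) (Fin k × Fin n) ℂ) :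
    Matrix (Fin k × Fin n) (Fin k × Fin n) ℂ :=
  ∑ a : Fin k, ∑ b : Fin k,
    (Matrix.single a b (1 : ℂ)) ⊗ₖ Φ (blockAt M a b)

/-- Completely positive linear map. -/
def IsCompletelyPositive {n : ℕ}
    (Φ : Matrix (Fin n) (Fin n) ℂ →ₗ[ℂ] Matrix (Fin n) (Fin n) ℂ) : Prop :=
  ∀ k : ℕ, 1 ≤ k → ∀ M : Matrix (Fin k × Fin n) (Fin k × Fin n) ℂ,
    M.PosSemidef → (matExtend k Φ M).PosSemidef

/-- Trace preserving linear map. -/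
def IsTracePreserving {n : ℕ}
    (Φ : Matrix (Fin n) (Fin n) ℂ →ₗ[ℂ] Matrix (Fin n) (Fin n) ℂ) : Prop :=
  ∀ X, (Φ X).trace = X.trace

/-- The partial trace over the second tensor factor. -/
def ptrace2 {n m : ℕ} (M : Matrix (Fin n × Fin m) (Fin n × Fin m) ℂ) :
    Matrix (Fin n) (Fin n) ℂ :=
  Matrix.of fun i j => ∑ k : Fin m, M (i, k) (j, k)

/-!
The Choi matrix `C = ∑ E_ab ⊗ Φ(E_ab)` is `(id ⊗ Φ)` applied to the (unnormalised) maximally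
entangled state, hence positive semidefinite by complete positivity. Factoring `C = BᴴB` and
reading the rows of `B` as matrices gives Kraus operators, `Φ ρ = ∑ₖ Kₖ ρ Kₖᴴ`, and trace
preservation forces `∑ₖ KₖᴴKₖ = 1`. Thus the stacked matrix `V = ∑ₖ Kₖ ⊗ |k⟩` is an isometry,
which we complete to a unitary `U` whose columns `(a, 0)` are those of `V`. With the environment
in the pure state `|0⟩⟨0|` we get `U (ρ ⊗ |0⟩⟨0|) Uᴴ = V ρ Vᴴ`, whose partial trace over the
environment is `∑ₖ Kₖ ρ Kₖᴴ = Φ ρ`.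
-/

open Matrix

section Choi

variable {ι ι' : Type*} [DecidableEq ι]

def choiMatrix (Φ : Matrix ι ι ℂ →ₗ[ℂ] Matrix ι' ι' ℂ) : Matrix (ι × ι') (ι × ι') ℂ :=
  of fun p q => Φ (single p.1 q.1 1) p.2 q.2

lemma apply_eq_sum_choiMatrix [Fintype ι] (Φ : Matrix ι ι ℂ →ₗ[ℂ] Matrix ι' ι' ℂ)
    (ρ : Matrix ι ι ℂ) (i j : ι') :
    Φ ρ i j = ∑ a, ∑ b, ρ a b * choiMatrix Φ (a, i) (b, j) := by
  have h a b : single a b (ρ a b) = ρ a b • single a b (1 : ℂ) := by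
    rw [smul_single, smul_eq_mul, mul_one]
  conv_lhs => rw [matrix_eq_sum_single ρ]
  simp only [h, map_sum, map_smul, Matrix.sum_apply, Matrix.smul_apply, smul_eq_mul, choiMatrix,
    of_apply]

def maxEntangledVec (ι : Type*) [DecidableEq ι] : ι × ι → ℂ :=
  fun p => if p.1 = p.2 then 1 else 0

def maxEntangled (ι : Type*) [DecidableEq ι] : Matrix (ι × ι) (ι × ι) ℂ :=
  vecMulVec (maxEntangledVec ι) (star (maxEntangledVec ι))

lemma posSemidef_maxEntangled [Finite ι] : (maxEntangled ι).PosSemidef :=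
  posSemidef_vecMulVec_self_star _

end Choi

lemma blockAt_maxEntangled {n : ℕ} (a b : Fin n) :
    blockAt (maxEntangled (Fin n)) a b = single a b 1 := by
  ext i j
  simp [blockAt, maxEntangled, maxEntangledVec, vecMulVec_apply, single_apply, ← ite_and,
    and_comm]

lemma matExtend_maxEntangled {n : ℕ}
    (Φ : Matrix (Fin n) (Fin n) ℂ →ₗ[ℂ] Matrix (Fin n) (Fin n) ℂ) :
    matExtend n Φ (maxEntangled (Fin n)) = choiMatrix Φ := by
  ext ⟨a, i⟩ ⟨b, j⟩
  simp [matExtend, blockAt_maxEntangled, choiMatrix, Matrix.sum_apply, single_apply, ite_and]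

lemma IsCompletelyPositive.posSemidef_choiMatrix {n : ℕ}
    {Φ : Matrix (Fin n) (Fin n) ℂ →ₗ[ℂ] Matrix (Fin n) (Fin n) ℂ} (hΦ : IsCompletelyPositive Φ)
    (hn : 1 ≤ n) : (choiMatrix Φ).PosSemidef :=
  matExtend_maxEntangled Φ ▸ hΦ n hn _ posSemidef_maxEntangled

section Kraus

variable {ι ι' κ : Type*} [Fintype ι] [Fintype ι']

lemma exists_kraus_of_posSemidef_choiMatrix [DecidableEq ι] [DecidableEq ι']
    {Φ : Matrix ι ι ℂ →ₗ[ℂ] Matrix ι' ι' ℂ} (hΦ : (choiMatrix Φ).PosSemidef) :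
    ∃ K : ι × ι' → Matrix ι' ι ℂ, ∀ ρ, Φ ρ = ∑ e, K e * ρ * (K e)ᴴ := by
  obtain ⟨B, hB⟩ : ∃ B, choiMatrix Φ = Bᴴ * B := by
    open scoped MatrixOrder Matrix.Norms.L2Operator in
    exact CStarAlgebra.nonneg_iff_eq_star_mul_self.mp hΦ.nonneg
  refine ⟨fun e => of fun i a => star (B e (a, i)), fun ρ => ?_⟩
  ext i j
  rw [apply_eq_sum_choiMatrix, hB]
  simp only [Matrix.sum_apply, mul_apply, conjTranspose_apply, of_apply, star_star,
    Finset.mul_sum, Finset.sum_mul]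
  conv_lhs => enter [2, a]; rw [Finset.sum_comm]
  rw [Finset.sum_comm]
  exact Finset.sum_congr rfl fun e _ => Finset.sum_comm.trans <|
    Finset.sum_congr rfl fun a _ => Finset.sum_congr rfl fun b _ => by ring

lemma sum_conjTranspose_mul_self_eq_one [DecidableEq ι] {R : Type*} [CommSemiring R]
    [StarRing R] [Fintype κ] (K : κ → Matrix ι' ι R)
    (hK : ∀ ρ : Matrix ι ι R, (∑ e, K e * ρ * (K e)ᴴ).trace = ρ.trace) :
    ∑ e, (K e)ᴴ * K e = 1 := by
  refine ext_iff_trace_mul_right.mpr fun ρ => ?_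
  rw [one_mul, ← hK ρ, Finset.sum_mul, trace_sum, trace_sum]
  exact Finset.sum_congr rfl fun e _ => (trace_mul_cycle (K e) ρ (K e)ᴴ).symm

end Kraus

section Dilation

variable {ι ι' κ R : Type*}

def krausStack (K : κ → Matrix ι' ι R) : Matrix (ι' × κ) ι R :=
  of fun p a => K p.2 p.1 a

lemma conjTranspose_krausStack_mul_krausStack [Fintype ι'] [Fintype κ] [NonUnitalSemiring R]
    [StarRing R] (K : κ → Matrix ι' ι R) :
    (krausStack K)ᴴ * krausStack K = ∑ k, (K k)ᴴ * K k := by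
  ext a b
  simp only [krausStack, mul_apply, conjTranspose_apply, of_apply, Fintype.sum_prod_type,
    Matrix.sum_apply]
  exact Finset.sum_comm

lemma ptrace2_krausStack_mul [Fintype ι] {n m : ℕ} (K : Fin m → Matrix (Fin n) ι ℂ)
    (ρ : Matrix ι ι ℂ) :
    ptrace2 (krausStack K * ρ * (krausStack K)ᴴ) = ∑ k, K k * ρ * (K k)ᴴ := by
  ext i j
  simp [ptrace2, krausStack, mul_apply, Matrix.sum_apply]

lemma mul_kronecker_single_mul_conjTranspose [Fintype ι] [Fintype κ] [DecidableEq κ]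
    [CommSemiring R] [StarRing R] {μ : Type*} (U : Matrix μ (ι × κ) R) (ρ : Matrix ι ι R)
    (z : κ) :
    U * (ρ ⊗ₖ single z z 1) * Uᴴ = U.submatrix id (·, z) * ρ * (U.submatrix id (·, z))ᴴ := by
  ext i j
  simp [mul_apply, kroneckerMap_apply, single_apply, Fintype.sum_prod_type, ite_and]

lemma exists_unitary_submatrix_eq {𝕜 : Type*} [RCLike 𝕜] [Fintype ι] [DecidableEq ι]
    [Fintype κ] [DecidableEq κ] {V : Matrix ι κ 𝕜} (hV : Vᴴ * V = 1) {f : κ → ι}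
    (hf : f.Injective) :
    ∃ U ∈ unitaryGroup ι 𝕜, U.submatrix id f = V := by
  let w : κ → EuclideanSpace 𝕜 ι := fun a => WithLp.toLp 2 (V.col a)
  have hw : Orthonormal 𝕜 w := by
    rw [orthonormal_iff_ite]
    intro a b
    simpa [w, PiLp.inner_apply, mul_apply, one_apply, mul_comm] using congrFun (congrFun hV a) b
  have hv : Orthonormal 𝕜 ((Set.range f).domRestrict (Function.extend f w 0)) := by
    convert hw.comp _ (Equiv.ofInjective f hf).symm.injective
    ext ⟨_, a, rfl⟩ : 1
    simp [hf.extend_apply]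
  obtain ⟨b, hb⟩ := hv.exists_orthonormalBasis_extension_of_card_eq finrank_euclideanSpace
  refine ⟨(EuclideanSpace.basisFun ι 𝕜).toBasis.toMatrix b,
    (EuclideanSpace.basisFun ι 𝕜).toMatrix_orthonormalBasis_mem_unitary b, ?_⟩
  ext r a
  simp [Module.Basis.toMatrix_apply, hb (f a) ⟨a, rfl⟩, hf.extend_apply, w]

end Dilation

/-- **Stinespring dilation.** Every quantum channel arises as a unitary evolution on a larger
system followed by a partial trace over the environment. -/
theorem stinespring_dilation {n : ℕ}
    (Φ : Matrix (Fin n) (Fin n) ℂ →ₗ[ℂ] Matrix (Fin n) (Fin n) ℂ)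
    (hCP : IsCompletelyPositive Φ) (hTP : IsTracePreserving Φ) :
    ∃ (m : ℕ), 1 ≤ m ∧
      ∃ (U : Matrix (Fin n × Fin m) (Fin n × Fin m) ℂ)
        (ρE : Matrix (Fin m) (Fin m) ℂ),
        Uᴴ * U = 1 ∧ U * Uᴴ = 1 ∧ ρE.PosSemidef ∧ ρE.trace = 1 ∧
        ∀ ρ : Matrix (Fin n) (Fin n) ℂ, Φ ρ = ptrace2 (U * (ρ ⊗ₖ ρE) * Uᴴ) := by
  rcases Nat.eq_zero_or_pos n with rfl | hn
  · exact ⟨1, le_rfl, 1, 1, by simp, by simp, .one, by simp, fun _ => Subsingleton.elim _ _⟩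
  obtain ⟨K₀, hK₀⟩ := exists_kraus_of_posSemidef_choiMatrix (hCP.posSemidef_choiMatrix hn)
  let K := K₀ ∘ finProdFinEquiv.symm
  have hΦ ρ : Φ ρ = ∑ k, K k * ρ * (K k)ᴴ :=
    (hK₀ ρ).trans (Equiv.sum_comp _ fun e => K₀ e * ρ * (K₀ e)ᴴ).symm
  have hK : ∑ k, (K k)ᴴ * K k = 1 :=
    sum_conjTranspose_mul_self_eq_one K fun ρ => hΦ ρ ▸ hTP ρ
  let z : Fin (n * n) := ⟨0, Nat.mul_pos hn hn⟩
  obtain ⟨U, hU, hUK⟩ := exists_unitary_submatrix_eq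
    ((conjTranspose_krausStack_mul_krausStack K).trans hK) (Prod.mk_left_injective z)
  refine ⟨n * n, Nat.mul_pos hn hn, U, single z z 1, mem_unitaryGroup_iff'.mp hU,
    mem_unitaryGroup_iff.mp hU, ?_, trace_single_eq_same z 1, fun ρ => ?_⟩
  · rw [← diagonal_single]
    exact posSemidef_diagonal_iff.mpr (Pi.single_nonneg.mpr zero_le_one)
  · rw [mul_kronecker_single_mul_conjTranspose, hUK, ptrace2_krausStack_mul, hΦ]
end
end

section
/- For every quantum channel Φ on Matrix (Fin 2) (Fin 2) ℂ there exist unitary matrices U₁, U₂ ∈ Matrix (Fin 2) (Fin 2) ℂ such that the map D(ρ) = U₁ᴴ * Φ(U₂ᴴ * ρ * U₂) * U₁ is a quantum channel whose Pauli representation D̂ satisfies D̂₀₀ = 1, D̂₀ⱼ = 0 for j ∈ {1,2,3}, and D̂ᵢⱼ = 0 for all i ≠ j with i, j ∈ {1,2,3}; that is, D̂ has the block form [[1, 0ᵀ], [γ, diag(λ₁, λ₂, λ₃)]] for some γ ∈ ℝ³ and λ₁, λ₂, λ₃ ∈ ℝ (the special orthogonal normal form). -/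
open scoped Kronecker ComplexOrder Matrix

noncomputable section

/-- The identity and the three Pauli matrices. -/
def pauli : Fin 4 → Matrix (Fin 2) (Fin 2) ℂ
  | 0 => 1
  | 1 => !![0, 1; 1, 0]
  | 2 => !![0, -Complex.I; Complex.I, 0]
  | 3 => !![1, 0; 0, -1]

/-- The Pauli (matrix) representation of a qubit linear map:
`Φ̂ i j = (1/2) trace (σ i * Φ (σ j))`. -/
def pauliRep (Φ : Matrix (Fin 2) (Fin 2) ℂ →ₗ[ℂ] Matrix (Fin 2) (Fin 2) ℂ) :
    Matrix (Fin 4) (Fin 4) ℂ :=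
  Matrix.of fun i j => (1 / 2 : ℂ) * (pauli i * Φ (pauli j)).trace

/-- A quantum channel: a completely positive and trace-preserving linear map. -/
def IsQuantumChannel {n : ℕ}
    (Φ : Matrix (Fin n) (Fin n) ℂ →ₗ[ℂ] Matrix (Fin n) (Fin n) ℂ) : Prop :=
  (∀ k : ℕ, 1 ≤ k → ∀ M : Matrix (Fin k × Fin n) (Fin k × Fin n) ℂ,
    M.PosSemidef → (matExtend k Φ M).PosSemidef) ∧
  (∀ X, (Φ X).trace = X.trace)

/-!
The Pauli representation turns composition of maps into matrix multiplication. Conjugation by a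
unitary has Pauli representation `1 ⊕ R` with `R ∈ SO(3)`, and every rotation arises this way:
write `R` with Euler angles and lift each elementary rotation, using half angles for the
`y`-rotations. A channel has a real Pauli representation (it preserves Hermiticity) whose first
row is `(1, 0, 0, 0)` (it preserves the trace). It therefore suffices to find `P, Q ∈ SO(3)` with
`P T Q` diagonal for the lower `3 × 3` block `T`: a singular value decomposition gives orthogonal
`P, Q`, and since `3` is odd their signs can be flipped to make the determinants `1`.
-/

open Matrix

section Channel

variable {n : ℕ}

def conjMap (U : Matrix (Fin n) (Fin n) ℂ) :
    Matrix (Fin n) (Fin n) ℂ →ₗ[ℂ] Matrix (Fin n) (Fin n) ℂ where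
  toFun ρ := Uᴴ * ρ * U
  map_add' x y := by rw [Matrix.mul_add, Matrix.add_mul]
  map_smul' c x := by rw [Matrix.mul_smul, Matrix.smul_mul, RingHom.id_apply]

@[simp] lemma conjMap_apply (U ρ : Matrix (Fin n) (Fin n) ℂ) :
    conjMap U ρ = Uᴴ * ρ * U := rfl

lemma conjMap_mul (A B : Matrix (Fin n) (Fin n) ℂ) :
    conjMap (A * B) = conjMap B ∘ₗ conjMap A := by
  ext1 ρ
  simp [conjTranspose_mul, Matrix.mul_assoc]

lemma matExtend_apply (Φ : Matrix (Fin n) (Fin n) ℂ →ₗ[ℂ] Matrix (Fin n) (Fin n) ℂ) {k : ℕ}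
    (M : Matrix (Fin k × Fin n) (Fin k × Fin n) ℂ) (a b : Fin k) (i j : Fin n) :
    matExtend k Φ M (a, i) (b, j) = Φ (blockAt M a b) i j := by
  simp only [matExtend, Matrix.sum_apply, kroneckerMap_apply, single, of_apply]
  rw [Finset.sum_eq_single a, Finset.sum_eq_single b] <;> simp +contextual [eq_comm]

lemma blockAt_matExtend (Φ : Matrix (Fin n) (Fin n) ℂ →ₗ[ℂ] Matrix (Fin n) (Fin n) ℂ) {k : ℕ}
    (M : Matrix (Fin k × Fin n) (Fin k × Fin n) ℂ) (a b : Fin k) :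
    blockAt (matExtend k Φ M) a b = Φ (blockAt M a b) := by
  ext i j
  exact matExtend_apply ..

lemma matExtend_comp (Φ Ψ : Matrix (Fin n) (Fin n) ℂ →ₗ[ℂ] Matrix (Fin n) (Fin n) ℂ) (k : ℕ)
    (M : Matrix (Fin k × Fin n) (Fin k × Fin n) ℂ) :
    matExtend k (Φ ∘ₗ Ψ) M = matExtend k Φ (matExtend k Ψ M) := by
  ext ⟨a, i⟩ ⟨b, j⟩
  rw [matExtend_apply, matExtend_apply, blockAt_matExtend, LinearMap.comp_apply]

lemma matExtend_conjMap (U : Matrix (Fin n) (Fin n) ℂ) (k : ℕ)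
    (M : Matrix (Fin k × Fin n) (Fin k × Fin n) ℂ) :
    matExtend k (conjMap U) M = (1 ⊗ₖ U)ᴴ * M * (1 ⊗ₖ U) := by
  ext ⟨a, i⟩ ⟨b, j⟩
  rw [matExtend_apply]
  simp only [conjMap_apply, mul_apply, conjTranspose_apply, kroneckerMap_apply, blockAt, of_apply,
    one_apply, Fintype.sum_prod_type]
  simp [Finset.mul_sum, apply_ite, mul_comm]

lemma isQuantumChannel_conjMap {U : Matrix (Fin n) (Fin n) ℂ}
    (hU : U ∈ unitaryGroup (Fin n) ℂ) : IsQuantumChannel (conjMap U) := by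
  refine ⟨fun k _ M hM => ?_, fun X => ?_⟩
  · rw [matExtend_conjMap]
    exact hM.conjTranspose_mul_mul_same _
  · rw [conjMap_apply, trace_mul_cycle, ← star_eq_conjTranspose, mem_unitaryGroup_iff.mp hU,
      Matrix.one_mul]

namespace IsQuantumChannel

variable {Φ Ψ : Matrix (Fin n) (Fin n) ℂ →ₗ[ℂ] Matrix (Fin n) (Fin n) ℂ}

lemma comp (hΦ : IsQuantumChannel Φ) (hΨ : IsQuantumChannel Ψ) : IsQuantumChannel (Φ ∘ₗ Ψ) :=
  ⟨fun k hk M hM => matExtend_comp Φ Ψ k M ▸ hΦ.1 k hk _ (hΨ.1 k hk M hM),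
    fun X => (hΦ.2 _).trans (hΨ.2 X)⟩

lemma posSemidef_apply (hΦ : IsQuantumChannel Φ) {X : Matrix (Fin n) (Fin n) ℂ}
    (hX : X.PosSemidef) : (Φ X).PosSemidef := by
  let e : Fin 1 × Fin n ≃ Fin n := Equiv.uniqueProd (Fin n) (Fin 1)
  have h := (hΦ.1 1 le_rfl _ (hX.submatrix e)).submatrix e.symm
  convert h using 1
  ext i j
  change _ = matExtend 1 Φ _ (0, i) (0, j)
  rw [matExtend_apply]
  rfl

open scoped MatrixOrder in
lemma isHermitian_apply (hΦ : IsQuantumChannel Φ) {X : Matrix (Fin n) (Fin n) ℂ}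
    (hX : X.IsHermitian) : (Φ X).IsHermitian := by
  rw [← CFC.posPart_sub_negPart X hX, map_sub]
  exact (hΦ.posSemidef_apply (nonneg_iff_posSemidef.mp (CFC.posPart_nonneg X))).isHermitian.sub
    (hΦ.posSemidef_apply (nonneg_iff_posSemidef.mp (CFC.negPart_nonneg X))).isHermitian

end IsQuantumChannel

end Channel

lemma Matrix.IsHermitian.im_trace_mul {m : Type*} [Fintype m] {A B : Matrix m m ℂ}
    (hA : A.IsHermitian) (hB : B.IsHermitian) : (A * B).trace.im = 0 := by
  have h := trace_conjTranspose (A * B)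
  rw [conjTranspose_mul, hA.eq, hB.eq, trace_mul_comm] at h
  exact Complex.conj_eq_iff_im.mp h.symm

section Pauli

@[simp] lemma pauli_zero : pauli 0 = 1 := rfl
@[simp] lemma pauli_one : pauli 1 = !![0, 1; 1, 0] := rfl
@[simp] lemma pauli_two : pauli 2 = !![0, -Complex.I; Complex.I, 0] := rfl
@[simp] lemma pauli_three : pauli 3 = !![1, 0; 0, -1] := rfl

lemma isHermitian_pauli (i : Fin 4) : (pauli i).IsHermitian := by
  fin_cases i <;> ext a b <;> fin_cases a <;> fin_cases b <;> simp

/-- The Pauli matrices are orthogonal for `⟨A, B⟩ = tr (A * B)`, each of square norm `2`. -/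
lemma eq_sum_pauli (X : Matrix (Fin 2) (Fin 2) ℂ) :
    X = ∑ j, ((1 / 2 : ℂ) * (pauli j * X).trace) • pauli j := by
  ext i j
  fin_cases i <;> fin_cases j <;>
    simp [trace_fin_two, mul_apply, Fin.sum_univ_four, one_apply] <;> ring_nf <;>
    simp [Complex.I_sq] <;> ring_nf

variable (Φ Ψ : Matrix (Fin 2) (Fin 2) ℂ →ₗ[ℂ] Matrix (Fin 2) (Fin 2) ℂ)

lemma pauliRep_comp : pauliRep (Φ ∘ₗ Ψ) = pauliRep Φ * pauliRep Ψ := by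
  ext i j
  simp only [pauliRep, of_apply, mul_apply, LinearMap.comp_apply]
  conv_lhs => rw [eq_sum_pauli (Ψ (pauli j))]
  simp only [map_sum, map_smul, Matrix.mul_smul, trace_sum, trace_smul,
    smul_eq_mul, Finset.mul_sum]
  exact Finset.sum_congr rfl fun k _ => by ring

lemma pauliRep_zero_apply (hΦ : ∀ X, (Φ X).trace = X.trace) (j : Fin 4) :
    pauliRep Φ 0 j = if j = 0 then 1 else 0 := by
  rw [pauliRep, of_apply, pauli_zero, Matrix.one_mul, hΦ]
  fin_cases j <;> simp [trace_fin_two]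

lemma im_pauliRep (hΦ : ∀ X, X.IsHermitian → (Φ X).IsHermitian) (i j : Fin 4) :
    (pauliRep Φ i j).im = 0 := by
  simp [pauliRep, (isHermitian_pauli i).im_trace_mul (hΦ _ (isHermitian_pauli j))]

end Pauli

section SingularValueDecomposition

open InnerProductSpace

variable {𝕜 : Type*} [RCLike 𝕜] {n : ℕ}

lemma Matrix.inner_mulVec_eq_zero_of_mulVec_eq_smul {T : Matrix (Fin n) (Fin n) 𝕜}
    {v w : Fin n → 𝕜} {μ : ℝ} (hw : (Tᴴ * T) *ᵥ w = μ • w)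
    (hvw : ⟪WithLp.toLp 2 v, WithLp.toLp 2 w⟫_𝕜 = 0) :
    ⟪WithLp.toLp 2 (T *ᵥ v), WithLp.toLp 2 (T *ᵥ w)⟫_𝕜 = 0 := by
  rw [EuclideanSpace.inner_toLp_toLp] at hvw ⊢
  rw [star_mulVec, dotProduct_comm, ← dotProduct_mulVec, mulVec_mulVec, hw, dotProduct_smul,
    dotProduct_comm, hvw, smul_zero]

theorem Matrix.exists_unitary_mul_mul_isDiag (T : Matrix (Fin n) (Fin n) 𝕜) :
    ∃ P ∈ unitaryGroup (Fin n) 𝕜, ∃ Q ∈ unitaryGroup (Fin n) 𝕜, (P * T * Q).IsDiag := by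
  have hS := isHermitian_conjTranspose_mul_self T
  set v := hS.eigenvectorBasis
  set f : Fin n → EuclideanSpace 𝕜 (Fin n) := fun j => WithLp.toLp 2 (T *ᵥ v j)
  have hf : Pairwise fun i j => ⟪f i, f j⟫_𝕜 = 0 := fun i j hij =>
    inner_mulVec_eq_zero_of_mulVec_eq_smul (hS.mulVec_eigenvectorBasis j)
      (v.orthonormal.2 hij)
  set b := gramSchmidtOrthonormalBasis (𝕜 := 𝕜) (by simp) f
  have hb : ∀ i j, i ≠ j → ⟪b i, f j⟫_𝕜 = 0 := by
    intro i j hij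
    by_cases hi : gramSchmidtNormed 𝕜 f i = 0
    · exact inner_gramSchmidtOrthonormalBasis_eq_zero _ hi j
    · rw [gramSchmidtOrthonormalBasis_apply _ hi, gramSchmidtNormed,
        gramSchmidt_of_orthogonal 𝕜 hf, inner_smul_left, hf hij, mul_zero]
  -- The rows of `P` are the `b i` and the columns of `Q` the `v j`: `(P * T * Q) i j = ⟪b i, f j⟫`.
  refine ⟨star ((EuclideanSpace.basisFun (Fin n) 𝕜).toBasis.toMatrix b.toBasis),
    Unitary.star_mem (OrthonormalBasis.toMatrix_orthonormalBasis_mem_unitary _ _),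
    hS.eigenvectorUnitary, hS.eigenvectorUnitary.2, fun i j hij => ?_⟩
  rw [← hb i j hij]
  simp only [mul_apply, star_apply, Module.Basis.toMatrix_apply, OrthonormalBasis.coe_toBasis,
    OrthonormalBasis.coe_toBasis_repr_apply, EuclideanSpace.basisFun_repr, PiLp.inner_apply, f,
    mulVec, dotProduct, Finset.sum_mul, IsHermitian.eigenvectorUnitary_apply, RCLike.inner_apply,
    RCLike.star_def]
  rw [Finset.sum_comm]
  exact Finset.sum_congr rfl fun k _ => Finset.sum_congr rfl fun l _ => by ring

end SingularValueDecomposition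

section SpecialOrthogonal

variable {n : ℕ}

lemma Matrix.exists_smul_mem_specialOrthogonalGroup (hn : Odd n) {A : Matrix (Fin n) (Fin n) ℝ}
    (hA : A ∈ orthogonalGroup (Fin n) ℝ) :
    ∃ ε : ℝ, ε • A ∈ specialOrthogonalGroup (Fin n) ℝ := by
  have hdet : A.det ^ 2 = 1 := by
    simpa [sq] using (Unitary.mem_iff.mp (det_of_mem_unitary hA)).1
  obtain ⟨k, rfl⟩ := hn
  refine ⟨A.det, mem_specialOrthogonalGroup_iff.mpr ⟨?_, ?_⟩⟩
  · rw [mem_orthogonalGroup_iff, transpose_smul, smul_mul_smul_comm, ← sq, hdet, one_smul,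
      ← mem_orthogonalGroup_iff]
    exact hA
  · rw [det_smul, Fintype.card_fin, ← pow_succ, show 2 * k + 1 + 1 = 2 * (k + 1) by ring,
      pow_mul, hdet, one_pow]

theorem Matrix.exists_specialOrthogonal_mul_mul_isDiag (hn : Odd n)
    (T : Matrix (Fin n) (Fin n) ℝ) :
    ∃ P ∈ specialOrthogonalGroup (Fin n) ℝ, ∃ Q ∈ specialOrthogonalGroup (Fin n) ℝ,
      (P * T * Q).IsDiag := by
  obtain ⟨P, hP, Q, hQ, hdiag⟩ := exists_unitary_mul_mul_isDiag T
  obtain ⟨ε, hεP⟩ := exists_smul_mem_specialOrthogonalGroup hn hP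
  obtain ⟨δ, hδQ⟩ := exists_smul_mem_specialOrthogonalGroup hn hQ
  refine ⟨ε • P, hεP, δ • Q, hδQ, ?_⟩
  rw [smul_mul_assoc, mul_smul_comm, smul_mul_assoc]
  exact (hdiag.smul ε).smul δ

end SpecialOrthogonal

section Rotation

/-- Rotations about the `z`- and the `y`-axis by the angle with cosine `c` and sine `s`. -/
def rotZ (c s : ℝ) : Matrix (Fin 3) (Fin 3) ℝ := !![c, -s, 0; s, c, 0; 0, 0, 1]

def rotY (c s : ℝ) : Matrix (Fin 3) (Fin 3) ℝ := !![c, 0, s; 0, 1, 0; -s, 0, c]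

variable {c s : ℝ}

lemma rotZ_mem_specialOrthogonalGroup (h : c ^ 2 + s ^ 2 = 1) :
    rotZ c s ∈ specialOrthogonalGroup (Fin 3) ℝ := by
  refine mem_specialOrthogonalGroup_iff.mpr ⟨(mem_orthogonalGroup_iff _ _).mpr ?_, ?_⟩
  · ext i j
    fin_cases i <;> fin_cases j <;>
      simp [rotZ, mul_apply, Fin.sum_univ_three, one_apply] <;> first | ring1 | linear_combination h
  · simp [rotZ, det_fin_three]
    linear_combination h

lemma rotY_mem_specialOrthogonalGroup (h : c ^ 2 + s ^ 2 = 1) :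
    rotY c s ∈ specialOrthogonalGroup (Fin 3) ℝ := by
  refine mem_specialOrthogonalGroup_iff.mpr ⟨(mem_orthogonalGroup_iff _ _).mpr ?_, ?_⟩
  · ext i j
    fin_cases i <;> fin_cases j <;>
      simp [rotY, mul_apply, Fin.sum_univ_three, one_apply] <;> first | ring1 | linear_combination h
  · simp [rotY, det_fin_three]
    linear_combination h

lemma exists_sphericalCoords {x y z : ℝ} (h : x ^ 2 + y ^ 2 + z ^ 2 = 1) :
    ∃ cφ sφ cθ sθ : ℝ, cφ ^ 2 + sφ ^ 2 = 1 ∧ cθ ^ 2 + sθ ^ 2 = 1 ∧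
      cφ * sθ = x ∧ sφ * sθ = y ∧ cθ = z := by
  set r := √(x ^ 2 + y ^ 2)
  have hr : r ^ 2 = x ^ 2 + y ^ 2 := Real.sq_sqrt (by positivity)
  rcases eq_or_ne r 0 with hr0 | hr0
  · have hx : x = 0 := by nlinarith
    have hy : y = 0 := by nlinarith
    exact ⟨1, 0, z, 0, by norm_num, by nlinarith, by simp [hx], by simp [hy], rfl⟩
  · refine ⟨x / r, y / r, z, r, ?_, by nlinarith, by field_simp, by field_simp, rfl⟩
    field_simp
    linarith

lemma exists_eq_rotZ_of_mem_specialOrthogonalGroup {B : Matrix (Fin 3) (Fin 3) ℝ}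
    (hB : B ∈ specialOrthogonalGroup (Fin 3) ℝ) (h02 : B 0 2 = 0) (h12 : B 1 2 = 0)
    (h22 : B 2 2 = 1) : ∃ c s : ℝ, c ^ 2 + s ^ 2 = 1 ∧ B = rotZ c s := by
  obtain ⟨hBo, hdet⟩ := mem_specialOrthogonalGroup_iff.mp hB
  have hBBt := congrFun₂ ((mem_orthogonalGroup_iff _ _).mp hBo)
  have hBtB := congrFun₂ ((mem_orthogonalGroup_iff' _ _).mp hBo)
  have hrow2 : B 2 0 ^ 2 + B 2 1 ^ 2 + B 2 2 ^ 2 = 1 := by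
    simpa [mul_apply, Fin.sum_univ_three, sq] using hBBt 2 2
  have h20 : B 2 0 = 0 := by nlinarith
  have h21 : B 2 1 = 0 := by nlinarith
  have hcol0 : B 0 0 ^ 2 + B 1 0 ^ 2 = 1 := by
    simpa [mul_apply, Fin.sum_univ_three, sq, h20] using hBtB 0 0
  have hcol1 : B 0 1 ^ 2 + B 1 1 ^ 2 = 1 := by
    simpa [mul_apply, Fin.sum_univ_three, sq, h21] using hBtB 1 1
  rw [det_fin_three, h02, h12, h20, h21, h22] at hdet
  have hsq : (B 0 0 - B 1 1) ^ 2 + (B 0 1 + B 1 0) ^ 2 = 0 := by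
    linear_combination hcol0 + hcol1 - 2 * hdet
  have h11 : B 1 1 = B 0 0 := by nlinarith
  have h01 : B 0 1 = -B 1 0 := by nlinarith
  refine ⟨B 0 0, B 1 0, hcol0, ?_⟩
  ext i j
  fin_cases i <;> fin_cases j <;> simp [rotZ, h01, h11, h02, h12, h20, h21, h22]

theorem exists_eq_rotZ_mul_rotY_mul_rotZ {R : Matrix (Fin 3) (Fin 3) ℝ}
    (hR : R ∈ specialOrthogonalGroup (Fin 3) ℝ) :
    ∃ c₁ s₁ c₂ s₂ c₃ s₃ : ℝ, c₁ ^ 2 + s₁ ^ 2 = 1 ∧ c₂ ^ 2 + s₂ ^ 2 = 1 ∧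
      c₃ ^ 2 + s₃ ^ 2 = 1 ∧ R = rotZ c₁ s₁ * rotY c₂ s₂ * rotZ c₃ s₃ := by
  have hcol2 : R 0 2 ^ 2 + R 1 2 ^ 2 + R 2 2 ^ 2 = 1 := by
    simpa [mul_apply, Fin.sum_univ_three, sq] using
      congrFun₂ ((mem_orthogonalGroup_iff' _ _).mp hR.1) 2 2
  obtain ⟨cφ, sφ, cθ, sθ, hφ, hθ, hx, hy, hz⟩ := exists_sphericalCoords hcol2
  set A := rotZ cφ sφ * rotY cθ sθ
  have hA : A ∈ specialOrthogonalGroup (Fin 3) ℝ :=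
    mul_mem (rotZ_mem_specialOrthogonalGroup hφ) (rotY_mem_specialOrthogonalGroup hθ)
  have hAR (k : Fin 3) : R k 2 = A k 2 := by
    fin_cases k <;> simp [A, rotZ, rotY, ← hx, ← hy, ← hz]
  set B := star A * R
  have hB : B ∈ specialOrthogonalGroup (Fin 3) ℝ :=
    mul_mem (star (⟨A, hA⟩ : specialOrthogonalGroup (Fin 3) ℝ)).2 hR
  have hBcol (k : Fin 3) : B k 2 = (star A * A) k 2 := by
    simp only [B, mul_apply, hAR]
  rw [mem_unitaryGroup_iff'.mp hA.1] at hBcol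
  obtain ⟨c₃, s₃, h₃, hBrot⟩ := exists_eq_rotZ_of_mem_specialOrthogonalGroup hB
    (by simpa using hBcol 0) (by simpa using hBcol 1) (by simpa using hBcol 2)
  refine ⟨cφ, sφ, cθ, sθ, c₃, s₃, hφ, hθ, h₃, ?_⟩
  calc R = A * star A * R := by rw [mem_unitaryGroup_iff.mp hA.1, Matrix.one_mul]
    _ = A * B := Matrix.mul_assoc ..
    _ = _ := by rw [hBrot]

end Rotation

section Lift

def blockDiagOne (R : Matrix (Fin 3) (Fin 3) ℝ) : Matrix (Fin 4) (Fin 4) ℂ :=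
  !![1, 0, 0, 0;
     0, R 0 0, R 0 1, R 0 2;
     0, R 1 0, R 1 1, R 1 2;
     0, R 2 0, R 2 1, R 2 2]

lemma blockDiagOne_mul (R S : Matrix (Fin 3) (Fin 3) ℝ) :
    blockDiagOne (R * S) = blockDiagOne R * blockDiagOne S := by
  ext i j
  fin_cases i <;> fin_cases j <;>
    simp [blockDiagOne, mul_apply, Fin.sum_univ_four, Fin.sum_univ_three]

lemma blockDiagOne_mul_mul_blockDiagOne_succ_succ (P Q T : Matrix (Fin 3) (Fin 3) ℝ)
    {M : Matrix (Fin 4) (Fin 4) ℂ} (hM : ∀ k l, M k.succ l.succ = T k l) (i j : Fin 3) :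
    (blockDiagOne P * M * blockDiagOne Q) i.succ j.succ = (P * T * Q) i j := by
  fin_cases i <;> fin_cases j <;>
    simp [blockDiagOne, mul_apply, vecMul, dotProduct, Fin.sum_univ_four, Fin.sum_univ_three, ← hM]

def unitaryZ (c s : ℝ) : Matrix (Fin 2) (Fin 2) ℂ := !![1, 0; 0, (c : ℂ) - s * Complex.I]

def unitaryY (c s : ℝ) : Matrix (Fin 2) (Fin 2) ℂ := !![(c : ℂ), (s : ℂ); -(s : ℂ), (c : ℂ)]

variable {c s : ℝ}

lemma unitaryZ_mem_unitaryGroup (h : c ^ 2 + s ^ 2 = 1) :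
    unitaryZ c s ∈ unitaryGroup (Fin 2) ℂ := by
  refine mem_unitaryGroup_iff.mpr ?_
  ext i j
  fin_cases i <;> fin_cases j <;> simp [unitaryZ, mul_apply, Complex.ext_iff]
  constructor <;> linarith

lemma unitaryY_mem_unitaryGroup (h : c ^ 2 + s ^ 2 = 1) :
    unitaryY c s ∈ unitaryGroup (Fin 2) ℂ := by
  refine mem_unitaryGroup_iff.mpr ?_
  ext i j
  fin_cases i <;> fin_cases j <;> simp [unitaryY, mul_apply, Complex.ext_iff] <;> linarith

lemma pauliRep_conjMap_unitaryZ (h : c ^ 2 + s ^ 2 = 1) :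
    pauliRep (conjMap (unitaryZ c s)) = blockDiagOne (rotZ c s) := by
  ext i j
  fin_cases i <;> fin_cases j <;>
    simp [pauliRep, unitaryZ, rotZ, blockDiagOne, trace_fin_two, mul_apply, conjTranspose_apply,
      Complex.ext_iff] <;> ring_nf <;> simp <;> linarith

lemma pauliRep_conjMap_unitaryY (h : c ^ 2 + s ^ 2 = 1) :
    pauliRep (conjMap (unitaryY c s)) = blockDiagOne (rotY (c ^ 2 - s ^ 2) (2 * c * s)) := by
  ext i j
  fin_cases i <;> fin_cases j <;>
    simp [pauliRep, unitaryY, rotY, blockDiagOne, trace_fin_two, mul_apply, conjTranspose_apply,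
      Complex.ext_iff] <;> ring_nf <;> simp [← Complex.ofReal_pow, h]

lemma exists_halfAngle (h : c ^ 2 + s ^ 2 = 1) :
    ∃ c' s' : ℝ, c' ^ 2 + s' ^ 2 = 1 ∧ c' ^ 2 - s' ^ 2 = c ∧ 2 * c' * s' = s := by
  rcases eq_or_lt_of_le (show -1 ≤ c by nlinarith) with hc | hc
  · exact ⟨0, 1, by norm_num, by rw [← hc]; ring, by nlinarith⟩
  · set c' := √((1 + c) / 2)
    have hc' : 0 < c' := Real.sqrt_pos.mpr (by linarith)
    have hc2 : c' ^ 2 = (1 + c) / 2 := Real.sq_sqrt (by linarith)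
    refine ⟨c', s / (2 * c'), ?_, ?_, by field_simp⟩ <;> field_simp <;> nlinarith

theorem exists_unitary_pauliRep_conjMap_eq {R : Matrix (Fin 3) (Fin 3) ℝ}
    (hR : R ∈ specialOrthogonalGroup (Fin 3) ℝ) :
    ∃ U ∈ unitaryGroup (Fin 2) ℂ, pauliRep (conjMap U) = blockDiagOne R := by
  obtain ⟨c₁, s₁, c₂, s₂, c₃, s₃, h₁, h₂, h₃, rfl⟩ := exists_eq_rotZ_mul_rotY_mul_rotZ hR
  obtain ⟨c, s, h, rfl, rfl⟩ := exists_halfAngle h₂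
  refine ⟨unitaryZ c₃ s₃ * unitaryY c s * unitaryZ c₁ s₁,
    mul_mem (mul_mem (unitaryZ_mem_unitaryGroup h₃) (unitaryY_mem_unitaryGroup h))
      (unitaryZ_mem_unitaryGroup h₁), ?_⟩
  rw [conjMap_mul, conjMap_mul, pauliRep_comp, pauliRep_comp, pauliRep_conjMap_unitaryZ h₁,
    pauliRep_conjMap_unitaryY h, pauliRep_conjMap_unitaryZ h₃, blockDiagOne_mul,
    blockDiagOne_mul, Matrix.mul_assoc]

end Lift

/-- **Special orthogonal normal form (Ruskai's decomposition).** Any qubit quantum channel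
can be brought, by composing with two unitary conjugations, to a channel whose Pauli
representation has the block form `[[1, 0ᵀ], [γ, diag (λ₁, λ₂, λ₃)]]` with real entries. -/
theorem special_orthogonal_normal_form
    (Φ : Matrix (Fin 2) (Fin 2) ℂ →ₗ[ℂ] Matrix (Fin 2) (Fin 2) ℂ)
    (hΦ : IsQuantumChannel Φ) :
    ∃ (U₁ U₂ : Matrix (Fin 2) (Fin 2) ℂ),
      U₁ᴴ * U₁ = 1 ∧ U₁ * U₁ᴴ = 1 ∧ U₂ᴴ * U₂ = 1 ∧ U₂ * U₂ᴴ = 1 ∧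
      ∃ D : Matrix (Fin 2) (Fin 2) ℂ →ₗ[ℂ] Matrix (Fin 2) (Fin 2) ℂ,
        (∀ ρ, D ρ = U₁ᴴ * Φ (U₂ᴴ * ρ * U₂) * U₁) ∧
        IsQuantumChannel D ∧
        pauliRep D 0 0 = 1 ∧
        (∀ j : Fin 4, j ≠ 0 → pauliRep D 0 j = 0) ∧
        (∀ i j : Fin 4, i ≠ 0 → j ≠ 0 → i ≠ j → pauliRep D i j = 0) ∧
        (∀ i j : Fin 4, (pauliRep D i j).im = 0) := by
  set T : Matrix (Fin 3) (Fin 3) ℝ := of fun k l => (pauliRep Φ k.succ l.succ).re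
  have hT (k l : Fin 3) : pauliRep Φ k.succ l.succ = T k l :=
    Complex.ext rfl (im_pauliRep Φ (fun _ => hΦ.isHermitian_apply) _ _)
  obtain ⟨P, hP, Q, hQ, hdiag⟩ := exists_specialOrthogonal_mul_mul_isDiag (by decide) T
  obtain ⟨U₁, hU₁, hrep₁⟩ := exists_unitary_pauliRep_conjMap_eq hP
  obtain ⟨U₂, hU₂, hrep₂⟩ := exists_unitary_pauliRep_conjMap_eq hQ
  set D := conjMap U₁ ∘ₗ Φ ∘ₗ conjMap U₂
  have hD : IsQuantumChannel D :=
    (isQuantumChannel_conjMap hU₁).comp (hΦ.comp (isQuantumChannel_conjMap hU₂))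
  have hrep : pauliRep D = blockDiagOne P * pauliRep Φ * blockDiagOne Q := by
    rw [pauliRep_comp, pauliRep_comp, hrep₁, hrep₂, Matrix.mul_assoc]
  refine ⟨U₁, U₂, mem_unitaryGroup_iff'.mp hU₁, mem_unitaryGroup_iff.mp hU₁,
    mem_unitaryGroup_iff'.mp hU₂, mem_unitaryGroup_iff.mp hU₂, D, fun ρ => rfl, hD,
    by simp [pauliRep_zero_apply D hD.2], fun j hj => by simp [pauliRep_zero_apply D hD.2, hj],
    ?_, im_pauliRep D fun _ => hD.isHermitian_apply⟩
  intro i j hi hj hij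
  obtain ⟨i, rfl⟩ := Fin.exists_succ_eq.mpr hi
  obtain ⟨j, rfl⟩ := Fin.exists_succ_eq.mpr hj
  rw [hrep, blockDiagOne_mul_mul_blockDiagOne_succ_succ P Q T hT,
    hdiag (fun h => hij (congrArg Fin.succ h)), Complex.ofReal_zero]

end
end
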